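/- Let X be a compact metric space and K a CW-complex (or more concretely, an absolute neighborhood retract). Suppose that for every ε > 0 there exist a compact metric space Y and a continuous surjection g : X → Y whose fibers all have diameter less than ε, such that K is an absolute extensor for Y. Then K is an absolute extensor for X. -/
import Mathlib

open Topology Metric Set

/-- `K` is an absolute extensor for `X`: every continuous map into `K` from a closed
subset of `X` extends continuously over all of `X`. -/
def IsAbsoluteExtensorFor (K X : Type*) [TopologicalSpace K] [TopologicalSpace X] :
    Prop :=
  ∀ A : Set X, IsClosed A → ∀ f : A → K, Continuous f →
    ∃ g : X → K, Continuous g ∧ ∀ a : A, g a = f a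

/-- Tube lemma for closed maps. -/
lemma tube_aux {X Z : Type*} [TopologicalSpace X] [TopologicalSpace Z] [CompactSpace X]
    [T2Space Z] {g : X → Z} (hg : Continuous g) {y : Z} {W : Set X} (hW : IsOpen W)
    (hfib : g ⁻¹' {y} ⊆ W) : ∃ V : Set Z, IsOpen V ∧ y ∈ V ∧ g ⁻¹' V ⊆ W := by
  refine ⟨(g '' Wᶜ)ᶜ, (hg.isClosedMap _ hW.isClosed_compl).isOpen_compl, ?_, ?_⟩
  · intro hy
    obtain ⟨x, hx, hxy⟩ := hy
    exact hx (hfib (by simp [hxy]))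
  · intro x hx
    by_contra hxW
    exact hx ⟨x, hxW, rfl⟩

/-- Let `X` be a compact metric space and `K` an ANR (formalized: `K`
embeds into some Euclidean space as a retract of an open neighborhood of its image).
Suppose for every `ε > 0` there are a compact metrizable space `Y` (realized as a
compact subset of `ℝ^ℕ`) and a continuous surjection `g : X → Y` all of whose fibers
have diameter `< ε`, such that `K` is an absolute extensor for `Y`. Then `K` is an
absolute extensor for `X`. -/
theorem absolute_extensor_of_eps_maps
    {X K : Type*} [MetricSpace X] [CompactSpace X] [TopologicalSpace K]
    (hK : ∃ (d : ℕ) (e : K → EuclideanSpace ℝ (Fin d)) (U : Set (EuclideanSpace ℝ (Fin d))),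
      IsEmbedding e ∧ IsOpen U ∧ Set.range e ⊆ U ∧
      ∃ r : U → K, Continuous r ∧ ∀ (x : K) (hx : e x ∈ U), r ⟨e x, hx⟩ = x)
    (h : ∀ ε > (0 : ℝ), ∃ Y : Set (ℕ → ℝ), IsCompact Y ∧
      ∃ g : X → Y, Continuous g ∧ Function.Surjective g ∧
        (∀ y : Y, Metric.diam (g ⁻¹' {y}) < ε) ∧ IsAbsoluteExtensorFor K Y) :
    IsAbsoluteExtensorFor K X := by
  obtain ⟨d, e, U, he, hUopen, heU, r, hr, hre⟩ := hK
  intro A hA f hf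
  rcases isEmpty_or_nonempty A with hAe | hAne
  · -- trivial case: A is empty; we only need some continuous map X → K
    obtain ⟨Y, hYc, g, hgc, hgs, _, hAE⟩ := h 1 one_pos
    obtain ⟨h', hh'c, -⟩ := hAE ∅ isClosed_empty
      (fun b => ((Set.notMem_empty _) b.2).elim)
      (continuous_def.mpr fun s _ => by
        rw [Set.eq_empty_of_isEmpty ((fun b : (∅ : Set Y) =>
          ((Set.notMem_empty _ b.2).elim : K)) ⁻¹' s)]
        exact isOpen_empty)
    exact ⟨h' ∘ g, hh'c.comp hgc, fun a => hAe.elim a⟩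
  have hAne' : A.Nonempty := Set.nonempty_coe_sort.mp ⟨Classical.arbitrary _⟩
  -- Step 1: Tietze extension of e ∘ f
  obtain ⟨F, hFr⟩ := ContinuousMap.exists_restrict_eq (X := X)
    (Y := EuclideanSpace ℝ (Fin d)) hA ⟨fun a => e (f a), he.continuous.comp hf⟩
  have hFA : ∀ a : A, F a = e (f a) := fun a => ContinuousMap.congr_fun hFr a
  -- Step 2: the compact set C
  set C : Set (EuclideanSpace ℝ (Fin d)) := F '' A with hC
  have hCcomp : IsCompact C := hA.isCompact.image F.continuous
  have hCne : C.Nonempty := hAne'.image F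
  have hCU : C ⊆ U := by
    rintro z ⟨a, ha, rfl⟩
    rw [hFA ⟨a, ha⟩]
    exact heU ⟨f ⟨a, ha⟩, rfl⟩
  -- Step 3: δ₁
  obtain ⟨δ₁, hδ₁pos, hδ₁⟩ := hCcomp.exists_thickening_subset_open hUopen hCU
  set α : ℝ := δ₁ / 8 with hα
  have hαpos : 0 < α := by positivity
  -- Step 4: the open set Wα where the retraction moves points by < α
  set Q : Set U := {u : U | ‖e (r u) - (u : EuclideanSpace ℝ (Fin d))‖ < α} with hQ
  set Wα : Set (EuclideanSpace ℝ (Fin d)) := Subtype.val '' Q with hWα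
  have hWopen : IsOpen Wα := by
    apply hUopen.isOpenMap_subtype_val
    exact isOpen_lt (((he.continuous.comp hr).sub continuous_subtype_val).norm)
      continuous_const
  have hWU : Wα ⊆ U := by rintro z ⟨u, hu, rfl⟩; exact u.2
  have hWQ : ∀ z (hz : z ∈ Wα) (hzU : z ∈ U), ‖e (r ⟨z, hzU⟩) - z‖ < α := by
    rintro z ⟨u, hu, rfl⟩ hzU
    have huu : (⟨(u : EuclideanSpace ℝ (Fin d)), hzU⟩ : U) = u := Subtype.ext rfl
    rw [huu]
    exact hu
  have hCW : C ⊆ Wα := by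
    rintro z ⟨a, ha, rfl⟩
    rw [hFA ⟨a, ha⟩]
    refine ⟨⟨e (f ⟨a, ha⟩), heU ⟨f ⟨a, ha⟩, rfl⟩⟩, ?_, rfl⟩
    simp only [hQ, Set.mem_setOf_eq, hre]
    simpa using hαpos
  -- Step 5: β and θ
  obtain ⟨β, hβpos, hβ⟩ := hCcomp.exists_thickening_subset_open hWopen hCW
  set θ : ℝ := min β α / 2 with hθ
  have hθpos : 0 < θ := by positivity
  have hθβ : θ < β := by
    have h1 : min β α ≤ β := min_le_left _ _
    rw [hθ]; linarith
  have hθα : θ < α := by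
    have h1 : min β α ≤ α := min_le_right _ _
    rw [hθ]; linarith
  -- Step 6: uniform continuity of F
  have hFu := CompactSpace.uniformContinuous_of_continuous F.continuous
  obtain ⟨ε, hεpos, hε⟩ := Metric.uniformContinuous_iff.mp hFu θ hθpos
  -- Step 7: get Y and g
  obtain ⟨Y, hYc, g, hgc, hgs, hfib, hAE⟩ := h ε hεpos
  haveI : CompactSpace Y := isCompact_iff_compactSpace.mp hYc
  letI : MetricSpace Y := TopologicalSpace.metrizableSpaceMetric Y
  -- Step 8: per-point data
  have key : ∀ y : Y, ∃ c : X, g c = y ∧ ∃ ρ > (0 : ℝ),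
      ∀ x : X, dist (g x) y < ρ → dist (F x) (F c) < θ := by
    intro y
    obtain ⟨c, hcy⟩ := hgs y
    refine ⟨c, hcy, ?_⟩
    have hfibW : g ⁻¹' {y} ⊆ F ⁻¹' (Metric.ball (F c) θ) := by
      intro x hx
      have hcx : c ∈ g ⁻¹' {y} := by simp [hcy]
      have hd : dist x c ≤ Metric.diam (g ⁻¹' {y}) :=
        Metric.dist_le_diam_of_mem (isCompact_univ.isBounded.subset (subset_univ _)) hx hcx
      exact hε (lt_of_le_of_lt hd (hfib y))
    obtain ⟨V, hVopen, hyV, hVW⟩ := tube_aux hgc (F.continuous.isOpen_preimage _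
      Metric.isOpen_ball) hfibW
    obtain ⟨ρ, hρpos, hρball⟩ := Metric.isOpen_iff.mp hVopen y hyV
    exact ⟨ρ, hρpos, fun x hx => hVW (hρball hx)⟩
  choose c hc ρ hρpos hρ using key
  -- Step 9: finite subcover
  obtain ⟨t, ht⟩ := isCompact_univ.elim_finite_subcover (fun y : Y => Metric.ball y (ρ y))
    (fun y => Metric.isOpen_ball)
    (fun z _ => Set.mem_iUnion.mpr ⟨z, Metric.mem_ball_self (hρpos z)⟩)
  -- Step 10: partition of unity weights and the map ψ
  set u : Y → Y → ℝ := fun i z => max (ρ i - dist z i) 0 with hu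
  have hu0 : ∀ i z, 0 ≤ u i z := fun i z => le_max_right _ _
  have huc : ∀ i, Continuous (u i) := fun i =>
    (continuous_const.sub (continuous_id.dist continuous_const)).max continuous_const
  have humem : ∀ i z, 0 < u i z → dist z i < ρ i := by
    intro i z hpos
    by_contra hge
    push_neg at hge
    have h0 : u i z = 0 := max_eq_right (by linarith)
    rw [h0] at hpos
    exact lt_irrefl _ hpos
  set S : Y → ℝ := fun z => ∑ i ∈ t, u i z with hS
  have hScont : Continuous S := continuous_finset_sum _ fun i _ => huc i
  have hSpos : ∀ z, 0 < S z := by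
    intro z
    obtain ⟨i, hit, hiz⟩ := Set.mem_iUnion₂.mp (ht (Set.mem_univ z))
    have hpos : 0 < u i z := lt_max_of_lt_left (sub_pos.mpr hiz)
    exact Finset.sum_pos' (fun j _ => hu0 j z) ⟨i, hit, hpos⟩
  set ψ : Y → EuclideanSpace ℝ (Fin d) := fun z => (S z)⁻¹ • ∑ i ∈ t, u i z • F (c i) with hψ
  have hψc : Continuous ψ :=
    (hScont.inv₀ fun z => (hSpos z).ne').smul
      (continuous_finset_sum _ fun i _ => (huc i).smul continuous_const)
  have hψF : ∀ x : X, ‖ψ (g x) - F x‖ ≤ θ := by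
    intro x
    have heq : ψ (g x) - F x = (S (g x))⁻¹ • ∑ i ∈ t, u i (g x) • (F (c i) - F x) := by
      have h1 : (S (g x))⁻¹ • (S (g x) • F x) = F x := by
        rw [smul_smul, inv_mul_cancel₀ (hSpos (g x)).ne', one_smul]
      calc ψ (g x) - F x
          = (S (g x))⁻¹ • (∑ i ∈ t, u i (g x) • F (c i)) - (S (g x))⁻¹ • (S (g x) • F x) := by
            rw [h1]
        _ = (S (g x))⁻¹ • ((∑ i ∈ t, u i (g x) • F (c i)) - S (g x) • F x) := by
            rw [smul_sub]
        _ = _ := by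
            congr 1
            simp only [hS]
            rw [Finset.sum_smul, ← Finset.sum_sub_distrib]
            exact Finset.sum_congr rfl fun i _ => (smul_sub _ _ _).symm
    rw [heq, norm_smul]
    have hterm : ∀ i ∈ t, ‖u i (g x) • (F (c i) - F x)‖ ≤ u i (g x) * θ := by
      intro i _
      rw [norm_smul, Real.norm_of_nonneg (hu0 i (g x))]
      rcases eq_or_lt_of_le (hu0 i (g x)) with h0 | h0
      · rw [← h0]; simp
      · refine mul_le_mul_of_nonneg_left ?_ (hu0 i (g x))
        have hd := hρ i x (humem i (g x) h0)
        rw [← dist_eq_norm, dist_comm]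
        exact hd.le
    have hsum : ‖∑ i ∈ t, u i (g x) • (F (c i) - F x)‖ ≤ S (g x) * θ := by
      refine (norm_sum_le _ _).trans ?_
      simp only [hS]
      rw [Finset.sum_mul]
      exact Finset.sum_le_sum hterm
    calc ‖(S (g x))⁻¹‖ * ‖∑ i ∈ t, u i (g x) • (F (c i) - F x)‖
        ≤ (S (g x))⁻¹ * (S (g x) * θ) := by
          rw [Real.norm_of_nonneg (inv_nonneg.mpr (hSpos (g x)).le)]
          exact mul_le_mul_of_nonneg_left hsum (inv_nonneg.mpr (hSpos (g x)).le)
      _ = θ := by rw [← mul_assoc, inv_mul_cancel₀ (hSpos (g x)).ne', one_mul]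
  -- Step 11: the map on B := g '' A and its extension
  set B : Set Y := g '' A with hB
  have hBclosed : IsClosed B := (hA.isCompact.image hgc).isClosed
  have hψW : ∀ a ∈ A, ψ (g a) ∈ Wα := by
    intro a ha
    apply hβ
    rw [Metric.mem_thickening_iff]
    refine ⟨F a, ⟨a, ha, rfl⟩, ?_⟩
    rw [dist_eq_norm]
    exact lt_of_le_of_lt (hψF a) hθβ
  have hBU : ∀ b : B, ψ (b : Y) ∈ U := by
    rintro ⟨b, a, ha, rfl⟩
    exact hWU (hψW a ha)
  obtain ⟨h', hh'c, hh'B⟩ := hAE B hBclosed (fun b => r ⟨ψ (b : Y), hBU b⟩)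
    (hr.comp ((hψc.comp continuous_subtype_val).subtype_mk _))
  -- Step 12: estimate on A
  have hhA : ∀ a : A, ‖e (h' (g a)) - F a‖ < 2 * α := by
    intro a
    have hmem : (g a : Y) ∈ B := ⟨a, a.2, rfl⟩
    have h1 : h' (g (a : X)) = r ⟨ψ (g (a : X)), hBU ⟨g a, hmem⟩⟩ := hh'B ⟨g a, hmem⟩
    have h2 : ‖e (r ⟨ψ (g (a : X)), hBU ⟨g a, hmem⟩⟩) - ψ (g (a : X))‖ < α :=
      hWQ _ (hψW a a.2) _
    have h3 := hψF (a : X)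
    have h4 := dist_triangle (e (h' (g (a : X)))) (ψ (g (a : X))) (F (a : X))
    rw [dist_eq_norm, dist_eq_norm, dist_eq_norm] at h4
    rw [h1] at h4 ⊢
    linarith
  -- Step 13: the open set N
  set N : Set X := {x | ‖e (h' (g x)) - F x‖ < 2 * α} ∩ {x | Metric.infDist (F x) C < θ}
    with hN
  have hNopen : IsOpen N := by
    rw [hN]
    exact (isOpen_lt (((he.continuous.comp (hh'c.comp hgc)).sub F.continuous).norm)
        continuous_const).inter
      (isOpen_lt ((Metric.continuous_infDist_pt C).comp F.continuous) continuous_const)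
  have hAN : A ⊆ N := by
    intro a ha
    refine ⟨hhA ⟨a, ha⟩, ?_⟩
    show Metric.infDist (F a) C < θ
    rw [Metric.infDist_zero_of_mem (show F a ∈ C from ⟨a, ha, rfl⟩)]
    exact hθpos
  -- Step 14: Urysohn function
  obtain ⟨φ, hφ0, hφ1, hφ01⟩ := exists_continuous_zero_one_of_isClosed
    hNopen.isClosed_compl hA (Set.disjoint_left.mpr fun x hx hxA => hx (hAN hxA))
  -- Step 15: the glued map H and the final retraction
  set H : X → EuclideanSpace ℝ (Fin d) := fun x => φ x • F x + (1 - φ x) • e (h' (g x))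
    with hH
  have hHc : Continuous H := (φ.continuous.smul F.continuous).add
    ((continuous_const.sub φ.continuous).smul (he.continuous.comp (hh'c.comp hgc)))
  have hHF : ∀ x, H x - F x = (1 - φ x) • (e (h' (g x)) - F x) := by
    intro x
    simp only [hH, smul_sub, sub_smul, one_smul]
    abel
  have hHU : ∀ x, H x ∈ U := by
    intro x
    by_cases hx : x ∈ N
    · apply hδ₁
      rw [Metric.mem_thickening_iff]
      obtain ⟨hx1, hx2⟩ := hx
      have hx1' : ‖e (h' (g x)) - F x‖ < 2 * α := hx1
      have hx2' : Metric.infDist (F x) C < θ := hx2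
      obtain ⟨zC, hzC, hdz⟩ := (Metric.infDist_lt_iff hCne).mp hx2'
      refine ⟨zC, hzC, ?_⟩
      have hφx0 : (0 : ℝ) ≤ φ x := (hφ01 x).1
      have hφx1 : φ x ≤ 1 := (hφ01 x).2
      have h3 : ‖H x - F x‖ ≤ 2 * α := by
        rw [hHF x, norm_smul, Real.norm_of_nonneg (by linarith : (0:ℝ) ≤ 1 - φ x)]
        calc (1 - φ x) * ‖e (h' (g x)) - F x‖ ≤ 1 * (2 * α) :=
              mul_le_mul (by linarith) hx1'.le (norm_nonneg _) one_pos.le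
          _ = 2 * α := one_mul _
      have h4 := dist_triangle (H x) (F x) zC
      rw [dist_eq_norm (H x) (F x)] at h4
      have hαδ : α = δ₁ / 8 := hα
      have : dist (H x) zC < 2 * α + θ := by linarith
      linarith
    · have hx0 : φ x = 0 := hφ0 hx
      have hHx : H x = e (h' (g x)) := by
        simp only [hH, hx0]
        simp
      rw [hHx]
      exact heU ⟨_, rfl⟩
  refine ⟨fun x => r ⟨H x, hHU x⟩, hr.comp (hHc.subtype_mk _), ?_⟩
  intro a
  have hHa : H (a : X) = e (f a) := by
    have hφa : φ (a : X) = 1 := hφ1 a.2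
    simp only [hH, hφa, hFA a]
    simp
  have hsub : (⟨H (a : X), hHU a⟩ : U) = ⟨e (f a), heU ⟨f a, rfl⟩⟩ := Subtype.ext hHa
  show r ⟨H (a : X), hHU a⟩ = f a
  rw [hsub]
  exact hre (f a) _
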